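/- Let f be a slice regular self-mapping of the open unit ball 𝔹 ⊂ 𝕆. Then for all w ∈ 𝔹, (1 - |f(w)|²)/(1 - |w|²) ≥ |1 - ⟨f(0), f(w)⟩|²/(1 - |f(0)|²), where ⟨·,·⟩ is the Euclidean inner product on 𝕆 ≅ ℝ⁸. -/

import Mathlib

noncomputable section

open Quaternion

/-- The octonions, realized via the Cayley–Dickson construction over the quaternions. -/
abbrev Octo := ℍ[ℝ] × ℍ[ℝ]

namespace Octo

/-- Octonion multiplication (Cayley–Dickson): (z₁,z₂)(w₁,w₂) = (z₁w₁ - w̄₂z₂, z₂w̄₁ + w₂z₁). -/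
def mul' (z w : Octo) : Octo :=
  (z.1 * w.1 - star w.2 * z.2, z.2 * star w.1 + w.2 * z.1)

/-- Octonionic conjugation. -/
def conj' (x : Octo) : Octo := (star x.1, -x.2)

/-- The multiplicative unit of the octonions. -/
def one' : Octo := (1, 0)

/-- The embedding of the reals into the octonions. -/
def emb (x : ℝ) : Octo := (algebraMap ℝ ℍ[ℝ] x, 0)

/-- The real part of an octonion. -/
def re' (x : Octo) : ℝ := x.1.re

/-- The imaginary part of an octonion. -/
def im' (x : Octo) : Octo := x - emb (re' x)

/-- The standard Euclidean inner product on 𝕆 ≅ ℝ⁸. -/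
def inner' (x y : Octo) : ℝ := (inner ℝ x.1 y.1 : ℝ) + (inner ℝ x.2 y.2 : ℝ)

/-- The Euclidean norm on the octonions. -/
def norm' (x : Octo) : ℝ := Real.sqrt (inner' x x)

/-- The multiplicative inverse of a nonzero octonion. -/
def inv' (x : Octo) : Octo := (inner' x x)⁻¹ • conj' x

/-- The associator [u,v,w] = (uv)w - u(vw). -/
def assoc' (u v w : Octo) : Octo := mul' (mul' u v) w - mul' u (mul' v w)

/-- n-th power of an octonion. -/
def pow' (x : Octo) : ℕ → Octo
  | 0 => one'
  | n + 1 => mul' x (pow' x n)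

/-- A purely imaginary unit octonion: I ∈ 𝕊 iff I² = -1. -/
def IsImUnit (I : Octo) : Prop := mul' I I = - one'

/-- The point x + yI on the slice ℂ_I. -/
def pt (I : Octo) (p : ℝ × ℝ) : Octo := emb p.1 + p.2 • I

/-- The slice ℂ_I = ℝ ⊕ Iℝ. -/
def sliceSet (I : Octo) : Set Octo := {z | ∃ p : ℝ × ℝ, z = pt I p}

/-- e^{θI} = cos θ + (sin θ) I. -/
def expI (θ : ℝ) (I : Octo) : Octo := emb (Real.cos θ) + Real.sin θ • I

/-- Slice regularity: on every slice ℂ_I the function is holomorphic, i.e. real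
differentiable with ∂f/∂x + I ∂f/∂y = 0. -/
def SliceRegular (Ω : Set Octo) (f : Octo → Octo) : Prop :=
  ∀ I, IsImUnit I → ∀ p : ℝ × ℝ, pt I p ∈ Ω →
    ∃ fx fy : Octo,
      HasFDerivAt (fun q : ℝ × ℝ => f (pt I q))
        ((ContinuousLinearMap.fst ℝ ℝ ℝ).smulRight fx
          + (ContinuousLinearMap.snd ℝ ℝ ℝ).smulRight fy) p
      ∧ fx + mul' I fy = 0

/-- Symmetric slice domain: open, connected, meeting the real axis, with each slice a
domain, and axially symmetric. -/
def SymSliceDomain (Ω : Set Octo) : Prop :=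
  IsOpen Ω ∧ IsConnected Ω ∧ (∃ x : ℝ, emb x ∈ Ω) ∧
  (∀ I, IsImUnit I → IsConnected {p : ℝ × ℝ | pt I p ∈ Ω}) ∧
  (∀ I J, IsImUnit I → IsImUnit J → ∀ p : ℝ × ℝ, pt I p ∈ Ω → pt J p ∈ Ω)

/-- The open unit ball 𝔹 of the octonions. -/
def ball1 : Set Octo := {z | norm' z < 1}

end Octo

/-!
Left multiplication by an imaginary unit `I` is an isometry of `𝕆 ≅ ℝ⁸` (the norm is
multiplicative) squaring to `-1` (alternativity), so it turns `𝕆` into a complex Hilbert space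
`≅ ℂ⁴` whose inner product has the octonionic inner product as real part. In these coordinates
the restriction of `f` to the slice `ℂ_I` through `w` is a holomorphic map from the unit disc into
the unit ball. For such a map `F`, composing with the Möbius automorphism of the ball sending
`F 0` to `0` and applying the Schwarz lemma gives
`‖1 - ⟪F 0, F z⟫‖² / (1 - ‖F 0‖²) ≤ (1 - ‖F z‖²) / (1 - ‖z‖²)`,
and passing to the real part of `⟪F 0, F z⟫` only decreases the left side.
-/

open Metric Set
open scoped InnerProductSpace

section BallMobius

variable {E : Type*} [NormedAddCommGroup E] [InnerProductSpace ℂ E]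

/-- The Möbius automorphism of the unit ball exchanging `a` and `0`: `c • a` is the orthogonal
projection of `x` on `ℂ a` (for `a = 0` the junk value `c = 0` is the right one). -/
def ballMobius (a x : E) : E :=
  let c : ℂ := ⟪a, x⟫_ℂ / (‖a‖ ^ 2 : ℝ)
  (1 - ⟪a, x⟫_ℂ)⁻¹ • ((1 - c) • a - (√(1 - ‖a‖ ^ 2) : ℂ) • (x - c • a))

lemma inner_ne_one_of_norm_lt_one {a x : E} (ha : ‖a‖ < 1) (hx : ‖x‖ < 1) : ⟪a, x⟫_ℂ ≠ 1 := by
  intro h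
  have := norm_inner_le_norm (𝕜 := ℂ) a x
  rw [h, norm_one] at this
  nlinarith [norm_nonneg a, norm_nonneg x]

lemma ballMobius_self (a : E) : ballMobius a a = 0 := by
  rcases eq_or_ne a 0 with rfl | ha
  · simp [ballMobius]
  · have hA : (‖a‖ : ℂ) ^ 2 ≠ 0 := by simpa using ha
    simp [ballMobius, inner_self_eq_norm_sq_to_K, div_self hA]

lemma differentiableOn_ballMobius {a : E} (ha : ‖a‖ < 1) :
    DifferentiableOn ℂ (ballMobius a) (ball 0 1) := by
  have hα : Differentiable ℂ (fun x => ⟪a, x⟫_ℂ) := (innerSL ℂ a).differentiable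
  refine DifferentiableOn.smul ?_ (Differentiable.differentiableOn (by fun_prop))
  refine ((differentiableOn_const 1).sub hα.differentiableOn).inv fun x hx => sub_ne_zero.2 ?_
  exact (inner_ne_one_of_norm_lt_one ha (mem_ball_zero_iff.1 hx)).symm

lemma norm_one_sub_inner_sq_mul_one_sub_norm_ballMobius_sq {a x : E} (ha : ‖a‖ ≤ 1)
    (hax : ⟪a, x⟫_ℂ ≠ 1) :
    ‖1 - ⟪a, x⟫_ℂ‖ ^ 2 * (1 - ‖ballMobius a x‖ ^ 2) = (1 - ‖a‖ ^ 2) * (1 - ‖x‖ ^ 2) := by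
  set A : ℝ := ‖a‖ ^ 2
  set c : ℂ := ⟪a, x⟫_ℂ / (A : ℂ)
  set Q : E := x - c • a
  have hα : ⟪a, x⟫_ℂ = c * A := by
    rcases eq_or_ne a 0 with rfl | ha0
    · simp [A]
    · have : (A : ℂ) ≠ 0 := by exact_mod_cast (pow_pos (norm_pos_iff.2 ha0) 2).ne'
      exact (div_mul_cancel₀ _ this).symm
  have hQ : ⟪a, Q⟫_ℂ = 0 := by
    rw [inner_sub_right, inner_smul_right, inner_self_eq_norm_sq_to_K, hα]
    simp [A]
  have hx : ‖x‖ ^ 2 = ‖Q‖ ^ 2 + ‖c‖ ^ 2 * A := by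
    have := norm_add_sq_eq_norm_sq_add_norm_sq_of_inner_eq_zero (𝕜 := ℂ) (c • a) Q
      (by rw [inner_smul_left, hQ, mul_zero])
    rw [show c • a + Q = x by simp [Q], norm_smul] at this
    linear_combination this
  have hN : ‖(1 - c) • a - (√(1 - A) : ℂ) • Q‖ ^ 2 = ‖1 - c‖ ^ 2 * A + (1 - A) * ‖Q‖ ^ 2 := by
    rw [@norm_sub_sq ℂ, inner_smul_left, inner_smul_right, hQ, norm_smul, norm_smul,
      Complex.norm_real, Real.norm_eq_abs, abs_of_nonneg (Real.sqrt_nonneg _), mul_pow,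
      mul_pow, Real.sq_sqrt (by nlinarith [norm_nonneg a])]
    simp [A]
  have hne : ‖1 - ⟪a, x⟫_ℂ‖ ≠ 0 := norm_ne_zero_iff.2 (sub_ne_zero.2 (Ne.symm hax))
  have hM : ‖1 - ⟪a, x⟫_ℂ‖ ^ 2 * ‖ballMobius a x‖ ^ 2
      = ‖(1 - c) • a - (√(1 - A) : ℂ) • Q‖ ^ 2 := by
    rw [ballMobius, norm_smul, norm_inv, mul_pow, ← mul_assoc, ← mul_pow, mul_inv_cancel₀ hne,
      one_pow, one_mul]
  rw [mul_sub, hM, hN, hx, hα]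
  simp only [Complex.sq_norm, Complex.normSq_apply, Complex.sub_re, Complex.sub_im,
    Complex.one_re, Complex.one_im, Complex.mul_re, Complex.mul_im, Complex.ofReal_re,
    Complex.ofReal_im]
  ring

lemma mapsTo_ballMobius {a : E} (ha : ‖a‖ < 1) :
    MapsTo (ballMobius a) (ball 0 1) (ball 0 1) := by
  intro x hx
  rw [mem_ball_zero_iff] at hx ⊢
  have hid := norm_one_sub_inner_sq_mul_one_sub_norm_ballMobius_sq ha.le
    (inner_ne_one_of_norm_lt_one ha hx)
  have hpos : 0 < (1 - ‖a‖ ^ 2) * (1 - ‖x‖ ^ 2) := by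
    apply mul_pos <;> nlinarith [norm_nonneg a, norm_nonneg x]
  have : 0 < 1 - ‖ballMobius a x‖ ^ 2 := pos_of_mul_pos_right (hid ▸ hpos) (sq_nonneg _)
  nlinarith [norm_nonneg (ballMobius a x)]

theorem Complex.schwarz_pick {F : ℂ → E} (hd : DifferentiableOn ℂ F (ball 0 1))
    (hF : MapsTo F (ball 0 1) (ball 0 1)) {z : ℂ} (hz : z ∈ ball (0 : ℂ) 1) :
    ‖1 - ⟪F 0, F z⟫_ℂ‖ ^ 2 / (1 - ‖F 0‖ ^ 2) ≤ (1 - ‖F z‖ ^ 2) / (1 - ‖z‖ ^ 2) := by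
  have h0 : ‖F 0‖ < 1 := mem_ball_zero_iff.1 (hF (mem_ball_self one_pos))
  have hz1 : ‖z‖ < 1 := mem_ball_zero_iff.1 hz
  have hM : ‖ballMobius (F 0) (F z)‖ ≤ ‖z‖ :=
    Complex.norm_le_norm_of_mapsTo_ball ((differentiableOn_ballMobius h0).comp hd hF)
      (((mapsTo_ballMobius h0).comp hF).mono_right ball_subset_closedBall)
      (ballMobius_self (F 0)) hz1
  have hid := norm_one_sub_inner_sq_mul_one_sub_norm_ballMobius_sq h0.le
    (inner_ne_one_of_norm_lt_one h0 (mem_ball_zero_iff.1 (hF hz)))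
  rw [div_le_div_iff₀ (by nlinarith [norm_nonneg (F 0)]) (by nlinarith [norm_nonneg z]),
    mul_comm (1 - ‖F z‖ ^ 2), ← hid]
  have := pow_le_pow_left₀ (norm_nonneg _) hM 2
  gcongr

end BallMobius

structure OrthogonalComplexStructure (V : Type*) [NormedAddCommGroup V]
    [InnerProductSpace ℝ V] where
  J : V →ₗᵢ[ℝ] V
  J_J : ∀ x, J (J x) = -x

namespace OrthogonalComplexStructure

variable {V : Type*} [NormedAddCommGroup V] [InnerProductSpace ℝ V]
  (S : OrthogonalComplexStructure V)

/-- `V` as a complex inner product space, `i` acting by `J`. -/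
def Space (_ : OrthogonalComplexStructure V) : Type _ := V

def toSpace : V → S.Space := id

def ofSpace : S.Space → V := id

instance : AddCommGroup S.Space := inferInstanceAs (AddCommGroup V)

instance : Module ℂ S.Space :=
  Module.compHom V (Complex.liftAux (S.J.toLinearMap : Module.End ℝ V)
    (LinearMap.ext S.J_J)).toRingHom

lemma smul_toSpace (z : ℂ) (x : V) : z • S.toSpace x = S.toSpace (z.re • x + z.im • S.J x) :=
  rfl

lemma ofSpace_smul (z : ℂ) (x : S.Space) :
    S.ofSpace (z • x) = z.re • S.ofSpace x + z.im • S.J (S.ofSpace x) := rfl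

lemma inner_J_left (x y : V) : ⟪S.J x, y⟫_ℝ = -⟪x, S.J y⟫_ℝ := by
  rw [← S.J.inner_map_map x (S.J y), S.J_J, inner_neg_right, neg_neg]

instance innerProductCore : InnerProductSpace.Core ℂ S.Space where
  inner x y := ⟨⟪S.ofSpace x, S.ofSpace y⟫_ℝ, ⟪S.J (S.ofSpace x), S.ofSpace y⟫_ℝ⟩
  conj_inner_symm x y := by
    apply Complex.ext
    · exact real_inner_comm _ _
    · simp only [Complex.conj_im]
      rw [S.inner_J_left, real_inner_comm, neg_neg]
  re_inner_nonneg _ := real_inner_self_nonneg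
  add_left x y z := by
    apply Complex.ext
    · exact inner_add_left _ _ _
    · simp only [Complex.add_im]
      rw [← inner_add_left, ← map_add]
      rfl
  smul_left x y z := by
    apply Complex.ext <;>
    simp only [ofSpace_smul, map_add, map_smul, S.J_J, inner_add_left, real_inner_smul_left,
      inner_neg_left, Complex.mul_re, Complex.mul_im, Complex.conj_re, Complex.conj_im] <;>
    ring
  definite x hx :=
    (inner_self_eq_zero (𝕜 := ℝ) (x := S.ofSpace x)).1 (congrArg Complex.re hx)

instance : NormedAddCommGroup S.Space := S.innerProductCore.toNormedAddCommGroup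

instance : InnerProductSpace ℂ S.Space := InnerProductSpace.ofCore _

lemma norm_toSpace (x : V) : ‖S.toSpace x‖ = ‖x‖ := by
  rw [@norm_eq_sqrt_re_inner ℂ, norm_eq_sqrt_real_inner]
  rfl

def equiv : V ≃ₗᵢ[ℝ] S.Space where
  toFun := S.toSpace
  invFun := S.ofSpace
  left_inv _ := rfl
  right_inv _ := rfl
  map_add' _ _ := rfl
  map_smul' r x := by
    change S.toSpace (r • x) = (r : ℂ) • S.toSpace x
    rw [S.smul_toSpace, Complex.ofReal_re, Complex.ofReal_im, zero_smul, add_zero]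
  norm_map' := S.norm_toSpace

lemma equiv_apply (x : V) : S.equiv x = S.toSpace x := rfl

/-- The Cauchy–Riemann equations for `J`. -/
lemma hasDerivAt_equiv_comp {g : ℂ → V} {L : ℂ →L[ℝ] V} {z : ℂ} (hg : HasFDerivAt g L z)
    {u : V} (hL : ∀ c : ℂ, L c = c.re • u + c.im • S.J u) :
    HasDerivAt (fun ζ => S.equiv (g ζ)) (S.equiv u) z := by
  rw [hasDerivAt_iff_hasFDerivAt]
  refine hasFDerivAt_of_restrictScalars ℝ
    ((S.equiv.toContinuousLinearEquiv : V →L[ℝ] S.Space).hasFDerivAt.comp z hg) ?_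
  ext c
  simp [hL, equiv_apply, smul_toSpace]

end OrthogonalComplexStructure

namespace Octo

lemma mul'_add_right (u x y : Octo) : mul' u (x + y) = mul' u x + mul' u y := by
  simp only [mul', Prod.fst_add, Prod.snd_add, star_add, Prod.mk_add_mk, Prod.mk.injEq]
  constructor <;> noncomm_ring

lemma mul'_smul_right (u : Octo) (t : ℝ) (x : Octo) : mul' u (t • x) = t • mul' u x := by
  simp [mul', smul_sub, smul_add]

lemma mul'_one' (u : Octo) : mul' u one' = u := by
  simp [mul', one']

lemma neg_one'_mul' (x : Octo) : mul' (-one') x = -x := by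
  simp [mul', one']
  rfl

lemma mul'_mul'_self_left (u x : Octo) : mul' u (mul' u x) = mul' (mul' u u) x := by
  simp only [mul', Prod.mk.injEq]
  constructor <;> ext <;>
    simp only [Quaternion.re_mul, Quaternion.imI_mul, Quaternion.imJ_mul, Quaternion.imK_mul,
      Quaternion.re_sub, Quaternion.imI_sub, Quaternion.imJ_sub, Quaternion.imK_sub,
      Quaternion.re_add, Quaternion.imI_add, Quaternion.imJ_add, Quaternion.imK_add,
      Quaternion.re_star, Quaternion.imI_star, Quaternion.imJ_star, Quaternion.imK_star] <;>
    ring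

lemma inner'_mul'_self (u x : Octo) :
    inner' (mul' u x) (mul' u x) = inner' u u * inner' x x := by
  simp only [mul', inner', Quaternion.inner_self, Quaternion.normSq_def', Quaternion.re_mul,
    Quaternion.imI_mul, Quaternion.imJ_mul, Quaternion.imK_mul,
    Quaternion.re_sub, Quaternion.imI_sub, Quaternion.imJ_sub, Quaternion.imK_sub,
    Quaternion.re_add, Quaternion.imI_add, Quaternion.imJ_add, Quaternion.imK_add,
    Quaternion.re_star, Quaternion.imI_star, Quaternion.imJ_star, Quaternion.imK_star]
  ring

lemma mul'_self (u : Octo) : mul' u u = (2 * re' u) • u - inner' u u • one' := by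
  ext <;>
    simp only [mul', re', inner', one', Quaternion.inner_self, Quaternion.normSq_def',
      Prod.fst_sub, Prod.snd_sub, Prod.smul_fst, Prod.smul_snd,
      Quaternion.re_mul, Quaternion.imI_mul, Quaternion.imJ_mul, Quaternion.imK_mul,
      Quaternion.re_sub, Quaternion.imI_sub, Quaternion.imJ_sub, Quaternion.imK_sub,
      Quaternion.re_add, Quaternion.imI_add, Quaternion.imJ_add, Quaternion.imK_add,
      Quaternion.re_star, Quaternion.imI_star, Quaternion.imJ_star, Quaternion.imK_star,
      Quaternion.re_smul, Quaternion.imI_smul, Quaternion.imJ_smul, Quaternion.imK_smul,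
      Quaternion.re_one, Quaternion.imI_one, Quaternion.imJ_one, Quaternion.imK_one,
      Quaternion.re_zero, Quaternion.imI_zero, Quaternion.imJ_zero, Quaternion.imK_zero,
      smul_eq_mul] <;>
    ring

lemma inner'_self_nonneg (x : Octo) : 0 ≤ inner' x x :=
  real_inner_self_nonneg (x := WithLp.toLp 2 x)

lemma norm'_eq_norm_toLp (x : Octo) : norm' x = ‖WithLp.toLp 2 x‖ := by
  rw [norm_eq_sqrt_real_inner]
  rfl

lemma emb_eq_smul_one' (r : ℝ) : emb r = r • one' := by
  ext <;> simp [emb, one']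

lemma pt_zero (I : Octo) : pt I (0, 0) = 0 := by
  simp [pt, emb]

lemma IsImUnit.inner'_self {I : Octo} (hI : IsImUnit I) : inner' I I = 1 := by
  have h := inner'_mul'_self I I
  rw [hI, show inner' (-one') (-one') = 1 by simp [inner', one']] at h
  nlinarith [inner'_self_nonneg I]

lemma isImUnit_of_re'_eq_zero {I : Octo} (h0 : re' I = 0) (h1 : inner' I I = 1) :
    IsImUnit I := by
  rw [IsImUnit, mul'_self, h0, h1]
  simp

lemma exists_isImUnit_eq_pt (w : Octo) : ∃ I p, IsImUnit I ∧ w = pt I p := by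
  have hw : w = emb (re' w) + im' w := by simp [im']
  by_cases hv : im' w = 0
  · refine ⟨(0, 1), (re' w, 0), isImUnit_of_re'_eq_zero (by simp [re']) (by simp [inner']), ?_⟩
    simpa [pt, hv] using hw
  · have hre : re' (im' w) = 0 := by simp [im', re', emb]
    set r := norm' (im' w)
    have hr : r ≠ 0 := by simpa [r, norm'_eq_norm_toLp] using hv
    refine ⟨r⁻¹ • im' w, (re' w, r), isImUnit_of_re'_eq_zero ?_ ?_, ?_⟩
    · simp only [re', Prod.smul_fst, Quaternion.re_smul, smul_eq_mul] at hre ⊢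
      rw [hre, mul_zero]
    · have h : inner' (im' w) (im' w) = r ^ 2 := (Real.sq_sqrt (inner'_self_nonneg _)).symm
      change ⟪WithLp.toLp 2 (r⁻¹ • im' w), WithLp.toLp 2 (r⁻¹ • im' w)⟫_ℝ = 1
      rw [WithLp.toLp_smul, real_inner_smul_left, real_inner_smul_right]
      change r⁻¹ * (r⁻¹ * inner' (im' w) (im' w)) = 1
      rw [h]
      field_simp
    · simpa [pt, smul_smul, hr] using hw

def sliceStructure (I : Octo) (hI : IsImUnit I) :
    OrthogonalComplexStructure (WithLp 2 Octo) where
  J :=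
    { toFun := fun x => WithLp.toLp 2 (mul' I (WithLp.ofLp x))
      map_add' := fun x y => by simp [mul'_add_right]
      map_smul' := fun t x => by simp [mul'_smul_right]
      norm_map' := fun x => by
        rw [LinearMap.coe_mk, AddHom.coe_mk, ← norm'_eq_norm_toLp, norm', inner'_mul'_self,
          hI.inner'_self, one_mul, norm_eq_sqrt_real_inner]
        rfl }
  J_J x := by
    simp [mul'_mul'_self_left, show mul' I I = -one' from hI, neg_one'_mul']

def toSlice (I : Octo) (hI : IsImUnit I) (x : Octo) : (sliceStructure I hI).Space :=
  (sliceStructure I hI).equiv (WithLp.toLp 2 x)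

lemma norm_toSlice {I : Octo} (hI : IsImUnit I) (x : Octo) : ‖toSlice I hI x‖ = norm' x := by
  rw [toSlice, LinearIsometryEquiv.norm_map, norm'_eq_norm_toLp]

lemma abs_one_sub_inner'_le {I : Octo} (hI : IsImUnit I) (x y : Octo) :
    |1 - inner' x y| ≤ ‖1 - ⟪toSlice I hI x, toSlice I hI y⟫_ℂ‖ :=
  Complex.abs_re_le_norm (1 - ⟪toSlice I hI x, toSlice I hI y⟫_ℂ)

lemma toSlice_pt {I : Octo} (hI : IsImUnit I) (ζ : ℂ) :
    toSlice I hI (pt I (ζ.re, ζ.im)) = ζ • toSlice I hI one' := by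
  simp only [toSlice, OrthogonalComplexStructure.equiv_apply,
    OrthogonalComplexStructure.smul_toSpace]
  congr 1
  simp [sliceStructure, pt, emb_eq_smul_one', mul'_one']

lemma norm'_pt {I : Octo} (hI : IsImUnit I) (ζ : ℂ) :
    norm' (pt I (ζ.re, ζ.im)) = ‖ζ‖ := by
  rw [← norm_toSlice hI, toSlice_pt, norm_smul, norm_toSlice]
  simp [norm', inner', one']

lemma pt_mem_ball1_iff {I : Octo} (hI : IsImUnit I) (ζ : ℂ) :
    pt I (ζ.re, ζ.im) ∈ ball1 ↔ ζ ∈ ball 0 1 := by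
  simp [ball1, norm'_pt hI]

lemma SliceRegular.differentiableOn_toSlice {Ω : Set Octo} {f : Octo → Octo}
    (hf : SliceRegular Ω f) {I : Octo} (hI : IsImUnit I) :
    DifferentiableOn ℂ (fun ζ : ℂ => toSlice I hI (f (pt I (ζ.re, ζ.im))))
      {ζ | pt I (ζ.re, ζ.im) ∈ Ω} := by
  intro ζ hζ
  obtain ⟨fx, fy, hD, hCR⟩ := hf I hI (ζ.re, ζ.im) hζ
  have hfy : fy = mul' I fx := by
    have := congrArg (mul' I) hCR
    rw [mul'_add_right, mul'_mul'_self_left, hI, neg_one'_mul'] at this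
    exact (add_neg_eq_zero.1 (this.trans (by simp [mul']))).symm
  have hg := ((WithLp.prodContinuousLinearEquiv 2 ℝ ℍ[ℝ] ℍ[ℝ]).symm :
      Octo →L[ℝ] WithLp 2 Octo).hasFDerivAt.comp ζ
    (hD.comp ζ Complex.equivRealProdCLM.hasFDerivAt)
  refine ((sliceStructure I hI).hasDerivAt_equiv_comp hg (u := WithLp.toLp 2 fx)
    fun c => ?_).differentiableAt.differentiableWithinAt
  simp [hfy, sliceStructure]

end Octo

open Octo in
/-- Schwarz–Pick type inequality for slice regular self-maps of the octonionic unit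
ball. -/
theorem schwarz_pick_type (f : Octo → Octo) (hf : SliceRegular ball1 f)
    (hmap : ∀ w ∈ ball1, f w ∈ ball1) (w : Octo) (hw : w ∈ ball1) :
    |1 - inner' (f 0) (f w)|^2 / (1 - (norm' (f 0))^2)
      ≤ (1 - (norm' (f w))^2) / (1 - (norm' w)^2) := by
  obtain ⟨I, p, hI, rfl⟩ := exists_isImUnit_eq_pt w
  set F := fun ζ : ℂ => toSlice I hI (f (pt I (ζ.re, ζ.im)))
  have hF : MapsTo F (ball 0 1) (ball 0 1) := fun ζ hζ => by
    simpa [F, ball1, norm_toSlice] using hmap _ ((pt_mem_ball1_iff hI ζ).2 hζ)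
  have key := Complex.schwarz_pick
    (Set.ext (pt_mem_ball1_iff hI) ▸ hf.differentiableOn_toSlice hI) hF
    ((pt_mem_ball1_iff hI ⟨p.1, p.2⟩).1 hw)
  rw [← norm'_pt hI ⟨p.1, p.2⟩] at key
  simp only [F, Complex.zero_re, Complex.zero_im, pt_zero, norm_toSlice, Prod.mk.eta] at key
  refine le_trans ?_ key
  have hf0 : norm' (f 0) < 1 := hmap 0 (by simp [ball1, norm', inner'])
  have : 0 ≤ norm' (f 0) := Real.sqrt_nonneg _
  gcongr
  · nlinarith
  · exact abs_one_sub_inner'_le hI _ _
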